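/- Let C be a k-dimensional ZMod 2-linear subspace of (Fin n → ZMod 2) and let e be a vector of minimal Hamming weight in its coset e + C (a coset leader), with wt(e) = l. Then the map that deletes from each codeword the l coordinates at which e is nonzero (i.e., the projection of vectors onto the coordinates {i : e i = 0}) is injective on C; consequently the image of C under this projection is an l-coordinate-shortened binary linear code of length n − l and dimension k (it still has exactly 2^k elements). -/
import Mathlib


/-- If `e` is a coset leader of the coset `e + C` of a `k`-dimensional binary
linear code `C ⊆ (Fin n → ZMod 2)` with Hamming weight `l`, then deleting the `l` coordinates
where `e` is nonzero (projecting onto `{i : e i = 0}`) is injective on `C`; the shortened code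
has length `n - l` and still `2 ^ k` elements. -/
theorem shortened_code_of_coset_leader {n k l : ℕ}
    (C : Submodule (ZMod 2) (Fin n → ZMod 2))
    (hk : Module.finrank (ZMod 2) C = k)
    (e : Fin n → ZMod 2)
    (hleader : ∀ c ∈ C, hammingNorm e ≤ hammingNorm (e + c))
    (hl : hammingNorm e = l) :
    Set.InjOn (fun (x : Fin n → ZMod 2) (i : {i : Fin n // e i = 0}) => x i.1) (C : Set _) ∧
    Fintype.card {i : Fin n // e i = 0} = n - l ∧
    Nat.card ((fun (x : Fin n → ZMod 2) (i : {i : Fin n // e i = 0}) => x i.1) '' (C : Set _))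
      = 2 ^ k := by
  have key : ∀ a b : ZMod 2, (a = 0 → b = 0) → (a + b ≠ 0 ↔ (a ≠ 0 ∧ ¬ b ≠ 0)) := by decide
  have hinj : Set.InjOn (fun (x : Fin n → ZMod 2) (i : {i : Fin n // e i = 0}) => x i.1)
      (C : Set _) := by
    intro x hx y hy h
    set d := x - y with hd
    have hdC : d ∈ C := sub_mem hx hy
    have hd0 : ∀ i, e i = 0 → d i = 0 := by
      intro i hi
      have := congrFun h ⟨i, hi⟩
      simpa [hd, sub_eq_zero] using this
    have hsub : (Finset.univ.filter fun i => d i ≠ 0) ⊆ (Finset.univ.filter fun i => e i ≠ 0) := by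
      intro i hi
      simp only [Finset.mem_filter, Finset.mem_univ, true_and] at hi ⊢
      exact fun h0 => hi (hd0 i h0)
    have hfil : (Finset.univ.filter fun i => (e + d) i ≠ 0) =
        (Finset.univ.filter fun i => e i ≠ 0) \ (Finset.univ.filter fun i => d i ≠ 0) := by
      ext i
      simp only [Finset.mem_filter, Finset.mem_sdiff, Finset.mem_univ, true_and,
        Pi.add_apply]
      exact key (e i) (d i) (hd0 i)
    have hcard : hammingNorm (e + d) = hammingNorm e - hammingNorm d := by
      simp only [hammingNorm, hfil]
      exact Finset.card_sdiff_of_subset hsub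
    have := hleader d hdC
    rw [hcard] at this
    have hle : hammingNorm d ≤ hammingNorm e := Finset.card_le_card hsub
    have hd0' : hammingNorm d = 0 := by omega
    have : d = 0 := by
      funext i
      by_contra hi
      have : i ∈ ({i | d i ≠ 0} : Finset (Fin n)) := by
        simp only [Finset.mem_filter, Finset.mem_univ, true_and]; exact hi
      rw [Finset.card_eq_zero.mp hd0'] at this
      exact absurd this (Finset.notMem_empty i)
    exact sub_eq_zero.mp this
  refine ⟨hinj, ?_, ?_⟩
  · rw [Fintype.card_subtype]
    have : ({i | e i = 0} : Finset (Fin n)) = ({i | e i ≠ 0} : Finset (Fin n))ᶜ := by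
      ext i; simp
    rw [show (Finset.univ.filter fun i => e i = 0) = ({i | e i = 0} : Finset (Fin n)) from rfl,
      this, Finset.card_compl]
    simp only [hammingNorm] at hl
    rw [hl, Fintype.card_fin]
  · rw [Nat.card_coe_set_eq, Set.ncard_image_of_injOn hinj, ← Nat.card_coe_set_eq]
    haveI : Fintype C := Fintype.ofFinite _
    have : Fintype.card C = 2 ^ k := by
      rw [Module.card_eq_pow_finrank (K := ZMod 2) (V := C), hk, ZMod.card]
    rw [show Nat.card (C : Set (Fin n → ZMod 2)) = Nat.card C from rfl, Nat.card_eq_fintype_card, this]
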